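/- For α, β ∈ ℂ, the 3-dimensional algebras G₀₅^α and G₀₅^β (with products e₁·e₂ = e₂, e₁·e₃ = α e₃ resp. β e₃) are isomorphic if α·β = 1. -/

import Mathlib

/-- Multiplication of G₀₅^γ on ℂ³: e₁e₂ = e₂, e₁e₃ = γ e₃. -/
noncomputable def mulG05 (γ : ℂ) (x y : Fin 3 → ℂ) : Fin 3 → ℂ :=
  ![0, x 0 * y 1, γ * (x 0 * y 2)]

/-! Swapping `e₂` and `e₃` and rescaling `e₁` by `α` is an isomorphism `G₀₅^α ≅ G₀₅^β`:
the new `e₁ = α e₁` acts on `e₃` by `αβ = 1` and on `e₂` by `α`. -/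

def scaleSwap {R : Type*} [CommSemiring R] (u : Rˣ) : (Fin 3 → R) ≃ₗ[R] (Fin 3 → R) where
  toFun x := ![u * x 0, x 2, x 1]
  invFun x := ![↑u⁻¹ * x 0, x 2, x 1]
  map_add' x y := by
    ext i
    fin_cases i <;> simp [mul_add]
  map_smul' c x := by
    ext i
    fin_cases i <;> simp [mul_left_comm]
  left_inv x := by
    ext i
    fin_cases i <;> simp
  right_inv x := by
    ext i
    fin_cases i <;> simp

theorem scaleSwap_apply {R : Type*} [CommSemiring R] (u : Rˣ) (x : Fin 3 → R) :
    scaleSwap u x = ![u * x 0, x 2, x 1] :=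
  rfl

theorem scaleSwap_mulG05 (u : ℂˣ) (x y : Fin 3 → ℂ) :
    scaleSwap u (mulG05 u x y) = mulG05 ↑u⁻¹ (scaleSwap u x) (scaleSwap u y) := by
  ext i
  fin_cases i <;> simp [scaleSwap_apply, mulG05, mul_assoc]

/-- G₀₅^α ≅ G₀₅^β whenever α·β = 1. -/
theorem stmt_11 (α β : ℂ) (h : α * β = 1) :
    ∃ φ : (Fin 3 → ℂ) ≃ₗ[ℂ] (Fin 3 → ℂ),
      ∀ x y, φ (mulG05 α x y) = mulG05 β (φ x) (φ y) :=
  ⟨scaleSwap (Units.mkOfMulEqOne α β h), scaleSwap_mulG05 _⟩
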